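/- arXiv:2010.12856 — 2 statements merged into one kernel-verified Lean document; each statement's English description precedes it below -/
import Mathlib

section
/- Let Φ : M_k(ℂ) → M_n(ℂ) be a unital positive linear map and p ∈ (0,1]. Then the map A ↦ Tr[Φ(A^p)^{-1/p}] on positive definite matrices is convex. -/
/-!
Write `M = (1 - l) A + l B`. Operator concavity of `t ↦ t ^ p` for `p ∈ [0, 1]` and positivity of
`Φ` give `(1 - l) Φ(A^p) + l Φ(B^p) ≤ Φ(M^p)` in the Loewner order. The function
`f t = t ^ (-1/p)` is convex and antitone on `(0, ∞)`, and for such `f` the trace functional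
`Tr f(·)` is convex and antitone on positive definite matrices: if `a X + b Y ≤ Z` and `(uᵢ)` is an
eigenbasis of `Z` with eigenvalues `μᵢ`, then
`f μᵢ ≤ f (a ⟪uᵢ, X uᵢ⟫ + b ⟪uᵢ, Y uᵢ⟫) ≤ a f ⟪uᵢ, X uᵢ⟫ + b f ⟪uᵢ, Y uᵢ⟫`, and Peierls' inequality
`∑ᵢ f ⟪uᵢ, X uᵢ⟫ ≤ Tr f(X)` (Jensen's inequality for the doubly stochastic weights
`‖⟪vⱼ, uᵢ⟫‖²`, `vⱼ` an eigenbasis of `X`) sums these up.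
-/

open scoped ComplexOrder Kronecker

/-- Matrix power via the continuous functional calculus. -/
noncomputable def mpow {n : Type*} [Fintype n] [DecidableEq n]
    (A : Matrix n n ℂ) (p : ℝ) : Matrix n n ℂ :=
  cfc (fun x : ℝ => x ^ p) A

/-- The Loewner order on matrices. -/
def LoewnerLE {n : Type*} [Fintype n] (A B : Matrix n n ℂ) : Prop :=
  (B - A).PosSemidef

/-- The matrix geometric mean `A # B = A^{1/2}(A^{-1/2} B A^{-1/2})^{1/2} A^{1/2}`. -/
noncomputable def geo {n : Type*} [Fintype n] [DecidableEq n]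
    (A B : Matrix n n ℂ) : Matrix n n ℂ :=
  mpow A (1/2) * mpow (mpow A (-(1/2)) * B * mpow A (-(1/2))) (1/2) * mpow A (1/2)

/-- The generalized Kantorovich constant. -/
noncomputable def Kconst (h p : ℝ) : ℝ :=
  ((h ^ p - h) / ((p - 1) * (h - 1))) *
    (((p - 1) / p) * ((h ^ p - 1) / (h ^ p - h))) ^ p

/-- The Specht ratio. -/
noncomputable def Specht (h : ℝ) : ℝ :=
  if h = 1 then 1 else (h - 1) * h ^ (1 / (h - 1)) / (Real.exp 1 * Real.log h)

open Set RCLike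
-- The L2 operator norm makes `Matrix n n ℂ` a C⋆-algebra, where operator concavity of
-- `a ↦ a ^ p` is available.
open scoped InnerProductSpace MatrixOrder Matrix.Norms.L2Operator

lemma Real.convexOn_rpow_of_nonpos {r : ℝ} (hr : r ≤ 0) :
    ConvexOn ℝ (Ioi 0) fun x : ℝ ↦ x ^ r := by
  have hlog : ConvexOn ℝ (Ioi 0) fun x ↦ Real.log x * r := by
    simpa [mul_comm] using strictConcaveOn_log_Ioi.concaveOn.neg.smul (neg_nonneg.2 hr)
  refine ⟨convex_Ioi 0, fun x hx y hy a b ha hb hab ↦ ?_⟩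
  have hxy : 0 < a • x + b • y := convex_Ioi 0 hx hy ha hb hab
  calc (a • x + b • y) ^ r = Real.exp (Real.log (a • x + b • y) * r) := Real.rpow_def_of_pos hxy r
    _ ≤ Real.exp (a • (Real.log x * r) + b • (Real.log y * r)) :=
        Real.exp_le_exp.2 (hlog.2 hx hy ha hb hab)
    _ ≤ a • Real.exp (Real.log x * r) + b • Real.exp (Real.log y * r) :=
        convexOn_exp.2 (mem_univ _) (mem_univ _) ha hb hab
    _ = a • x ^ r + b • y ^ r := by rw [Real.rpow_def_of_pos hx, Real.rpow_def_of_pos hy]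

section Peierls

variable {𝕜 E ι κ : Type*} [RCLike 𝕜] [NormedAddCommGroup E] [InnerProductSpace 𝕜 E]
  [Fintype ι] [Fintype κ] {T : E →ₗ[𝕜] E} {u : OrthonormalBasis ι 𝕜 E} {μ : ι → ℝ}

lemma LinearMap.IsSymmetric.re_inner_map_self_eq_sum (hT : T.IsSymmetric)
    (hu : ∀ j, T (u j) = (μ j : 𝕜) • u j) (x : E) :
    re ⟪x, T x⟫_𝕜 = ∑ j, ‖⟪u j, x⟫_𝕜‖ ^ 2 * μ j := by
  rw [← u.sum_inner_mul_inner, map_sum]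
  refine Finset.sum_congr rfl fun j _ ↦ ?_
  rw [← hT, hu, inner_smul_left, conj_ofReal, mul_left_comm, re_ofReal_mul, mul_comm,
    ← inner_conj_symm x, mul_comm, RCLike.conj_mul, ← ofReal_pow, ofReal_re, mul_comm]

lemma ConvexOn.map_re_inner_map_self_le {s : Set ℝ} {f : ℝ → ℝ} (hf : ConvexOn ℝ s f)
    (hμ : ∀ j, μ j ∈ s) (hT : T.IsSymmetric) (hu : ∀ j, T (u j) = (μ j : 𝕜) • u j)
    {x : E} (hx : ‖x‖ = 1) :
    f (re ⟪x, T x⟫_𝕜) ≤ ∑ j, ‖⟪u j, x⟫_𝕜‖ ^ 2 * f (μ j) := by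
  rw [hT.re_inner_map_self_eq_sum hu]
  exact hf.map_sum_le (fun j _ ↦ by positivity) (by rw [u.sum_sq_norm_inner_right, hx, one_pow])
    fun j _ ↦ hμ j

lemma ConvexOn.sum_map_re_inner_map_self_le {s : Set ℝ} {f : ℝ → ℝ} (hf : ConvexOn ℝ s f)
    (hμ : ∀ j, μ j ∈ s) (hT : T.IsSymmetric) (hu : ∀ j, T (u j) = (μ j : 𝕜) • u j)
    (b : OrthonormalBasis κ 𝕜 E) :
    ∑ i, f (re ⟪b i, T (b i)⟫_𝕜) ≤ ∑ j, f (μ j) :=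
  calc ∑ i, f (re ⟪b i, T (b i)⟫_𝕜)
      ≤ ∑ i, ∑ j, ‖⟪u j, b i⟫_𝕜‖ ^ 2 * f (μ j) :=
        Finset.sum_le_sum fun i _ ↦ hf.map_re_inner_map_self_le hμ hT hu (b.orthonormal.1 i)
    _ = ∑ j, f (μ j) := by
        rw [Finset.sum_comm]
        simp_rw [← Finset.sum_mul, b.sum_sq_norm_inner_left, u.orthonormal.1, one_pow, one_mul]

end Peierls

namespace Matrix

variable {𝕜 n : Type*} [RCLike 𝕜] [Fintype n] [DecidableEq n]

lemma IsHermitian.toEuclideanLin_eigenvectorBasis {X : Matrix n n 𝕜} (hX : X.IsHermitian)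
    (j : n) :
    toEuclideanLin X (hX.eigenvectorBasis j) = (hX.eigenvalues j : 𝕜) • hX.eigenvectorBasis j := by
  ext1
  simp only [toLpLin_apply, hX.mulVec_eigenvectorBasis, RCLike.real_smul_eq_coe_smul (K := 𝕜)]
  rfl

lemma IsHermitian.re_trace_cfc {X : Matrix n n 𝕜} (hX : X.IsHermitian) (f : ℝ → ℝ) :
    re (cfc f X).trace = ∑ j, f (hX.eigenvalues j) := by
  rw [hX.cfc_eq, IsHermitian.cfc, Unitary.conjStarAlgAut_apply, trace_mul_cycle,
    Unitary.coe_star_mul_self, one_mul, trace_diagonal, map_sum]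
  simp

lemma inner_toEuclideanLin (X : Matrix n n 𝕜) (v : EuclideanSpace 𝕜 n) :
    ⟪v, toEuclideanLin X v⟫_𝕜 = star (WithLp.ofLp v) ⬝ᵥ X *ᵥ WithLp.ofLp v := by
  rw [EuclideanSpace.inner_eq_star_dotProduct, dotProduct_comm]
  rfl

lemma re_inner_toEuclideanLin_pos {X : Matrix n n 𝕜} (hX : X.PosDef) {v : EuclideanSpace 𝕜 n}
    (hv : v ≠ 0) : 0 < re ⟪v, toEuclideanLin X v⟫_𝕜 := by
  rw [inner_toEuclideanLin]
  exact hX.re_dotProduct_pos (by simpa using hv)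

lemma re_inner_toEuclideanLin_le_of_le {X Y : Matrix n n 𝕜} (h : X ≤ Y) (v : EuclideanSpace 𝕜 n) :
    re ⟪v, toEuclideanLin X v⟫_𝕜 ≤ re ⟪v, toEuclideanLin Y v⟫_𝕜 := by
  have := (le_iff.mp h).re_dotProduct_nonneg (WithLp.ofLp v)
  rw [sub_mulVec, dotProduct_sub, map_sub, sub_nonneg] at this
  simpa only [inner_toEuclideanLin] using this

lemma re_inner_toEuclideanLin_smul_add_smul (X Y : Matrix n n 𝕜) (a b : ℝ)
    (v : EuclideanSpace 𝕜 n) :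
    re ⟪v, toEuclideanLin (a • X + b • Y) v⟫_𝕜
      = a * re ⟪v, toEuclideanLin X v⟫_𝕜 + b * re ⟪v, toEuclideanLin Y v⟫_𝕜 := by
  simp only [inner_toEuclideanLin]
  simp only [add_mulVec, smul_mulVec, dotProduct_add, dotProduct_smul, map_add, RCLike.smul_re]

lemma IsHermitian.sum_map_re_inner_le_re_trace_cfc {X : Matrix n n 𝕜} (hX : X.IsHermitian)
    {s : Set ℝ} {f : ℝ → ℝ} (hf : ConvexOn ℝ s f) (hs : ∀ j, hX.eigenvalues j ∈ s) {κ : Type*}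
    [Fintype κ] (b : OrthonormalBasis κ 𝕜 (EuclideanSpace 𝕜 n)) :
    ∑ i, f (re ⟪b i, toEuclideanLin X (b i)⟫_𝕜) ≤ re (cfc f X).trace := by
  rw [hX.re_trace_cfc]
  exact hf.sum_map_re_inner_map_self_le hs (isSymmetric_toEuclideanLin_iff.mpr hX)
    hX.toEuclideanLin_eigenvectorBasis b

theorem re_trace_cfc_le_of_smul_add_smul_le {X Y Z : Matrix n n 𝕜} (hX : X.PosDef)
    (hY : Y.PosDef) {a b : ℝ} (ha : 0 ≤ a) (hb : 0 ≤ b) (hab : a + b = 1) (hZ : a • X + b • Y ≤ Z)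
    {f : ℝ → ℝ} (hf : ConvexOn ℝ (Ioi 0) f) (hf' : AntitoneOn f (Ioi 0)) :
    re (cfc f Z).trace ≤ a * re (cfc f X).trace + b * re (cfc f Y).trace := by
  have hZ' : Z.IsHermitian := by
    simpa using (le_iff.mp hZ).1.add ((hX.posSemidef.smul ha).add (hY.posSemidef.smul hb)).1
  set u := hZ'.eigenvectorBasis
  have key : ∀ i, f (hZ'.eigenvalues i) ≤
      a * f (re ⟪u i, toEuclideanLin X (u i)⟫_𝕜) + b * f (re ⟪u i, toEuclideanLin Y (u i)⟫_𝕜) := by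
    intro i
    have hXi := re_inner_toEuclideanLin_pos hX (u.orthonormal.ne_zero i)
    have hYi := re_inner_toEuclideanLin_pos hY (u.orthonormal.ne_zero i)
    have hmem : a * re ⟪u i, toEuclideanLin X (u i)⟫_𝕜 + b * re ⟪u i, toEuclideanLin Y (u i)⟫_𝕜
        ∈ Ioi 0 := convex_Ioi (0 : ℝ) hXi hYi ha hb hab
    have hμ : a * re ⟪u i, toEuclideanLin X (u i)⟫_𝕜 + b * re ⟪u i, toEuclideanLin Y (u i)⟫_𝕜
        ≤ hZ'.eigenvalues i := by
      have := re_inner_toEuclideanLin_le_of_le hZ (u i)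
      rw [re_inner_toEuclideanLin_smul_add_smul, hZ'.toEuclideanLin_eigenvectorBasis,
        inner_smul_right, inner_self_eq_norm_sq_to_K, u.orthonormal.1 i] at this
      simpa using this
    exact (hf' hmem (lt_of_lt_of_le hmem hμ) hμ).trans (hf.2 hXi hYi ha hb hab)
  calc re (cfc f Z).trace = ∑ i, f (hZ'.eigenvalues i) := hZ'.re_trace_cfc f
    _ ≤ ∑ i, (a * f (re ⟪u i, toEuclideanLin X (u i)⟫_𝕜)
          + b * f (re ⟪u i, toEuclideanLin Y (u i)⟫_𝕜)) := Finset.sum_le_sum fun i _ ↦ key i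
    _ = a * ∑ i, f (re ⟪u i, toEuclideanLin X (u i)⟫_𝕜)
          + b * ∑ i, f (re ⟪u i, toEuclideanLin Y (u i)⟫_𝕜) := by
        rw [Finset.sum_add_distrib, Finset.mul_sum, Finset.mul_sum]
    _ ≤ a * re (cfc f X).trace + b * re (cfc f Y).trace := by
        gcongr
        · exact hX.1.sum_map_re_inner_le_re_trace_cfc hf hX.eigenvalues_pos u
        · exact hY.1.sum_map_re_inner_le_re_trace_cfc hf hY.eigenvalues_pos u

end Matrix

lemma IsStrictlyPositive.map_of_monotone_of_map_one {A B : Type*} [CStarAlgebra A]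
    [PartialOrder A] [StarOrderedRing A] [CStarAlgebra B] [PartialOrder B] [StarOrderedRing B]
    {Φ : A →ₗ[ℂ] B}
    (hΦ : Monotone Φ) (hΦ₁ : Φ 1 = 1) {a : A} (ha : IsStrictlyPositive a) :
    IsStrictlyPositive (Φ a) := by
  rcases subsingleton_or_nontrivial A with hA | hA
  · rw [Subsingleton.elim a 1, hΦ₁]
    exact isStrictlyPositive_one
  obtain ⟨r, hr, hra⟩ := (CFC.exists_pos_algebraMap_le_iff ha.isSelfAdjoint).mpr
    fun x hx ↦ ha.spectrum_pos hx
  refine (isStrictlyPositive_algebraMap hr).of_le ?_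
  simpa [Algebra.algebraMap_eq_smul_one, LinearMap.map_smul_of_tower, hΦ₁] using hΦ hra

lemma mpow_eq_rpow {n : Type*} [Fintype n] [DecidableEq n] {A : Matrix n n ℂ} (hA : A.PosSemidef)
    (p : ℝ) : mpow A p = A ^ p :=
  (CFC.rpow_eq_cfc_real (Matrix.nonneg_iff_posSemidef.mpr hA)).symm

theorem trace_phi_neg_inv_pow_convex {k n : Type*} [Fintype k] [DecidableEq k]
    [Fintype n] [DecidableEq n]
    (Φ : Matrix k k ℂ →ₗ[ℂ] Matrix n n ℂ)
    (hΦpos : ∀ A : Matrix k k ℂ, A.PosSemidef → (Φ A).PosSemidef)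
    (hΦunital : Φ 1 = 1)
    (p : ℝ) (hp0 : 0 < p) (hp1 : p ≤ 1)
    (A B : Matrix k k ℂ) (hA : A.PosDef) (hB : B.PosDef)
    (l : ℝ) (hl0 : 0 ≤ l) (hl1 : l ≤ 1) :
    (mpow (Φ (mpow ((1 - l) • A + l • B) p)) (-(1/p))).trace.re ≤
      (1 - l) * (mpow (Φ (mpow A p)) (-(1/p))).trace.re
        + l * (mpow (Φ (mpow B p)) (-(1/p))).trace.re := by
  have hΦmono : Monotone Φ := fun X Y h ↦ by simpa [Matrix.le_iff] using hΦpos _ h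
  have hM : ((1 - l) • A + l • B).PosSemidef :=
    (hA.posSemidef.smul (sub_nonneg.2 hl1)).add (hB.posSemidef.smul hl0)
  have hΦpow : ∀ {X : Matrix k k ℂ}, X.PosDef → (Φ (X ^ p)).PosDef := fun hX ↦ by
    rw [← Matrix.isStrictlyPositive_iff_posDef] at hX ⊢
    exact (hX.rpow _ p).map_of_monotone_of_map_one hΦmono hΦunital
  have hconc : (1 - l) • Φ (A ^ p) + l • Φ (B ^ p) ≤ Φ (((1 - l) • A + l • B) ^ p) := by
    simpa [LinearMap.map_smul_of_tower] using hΦmono <| (CFC.concaveOn_rpow ⟨hp0.le, hp1⟩).2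
      (Matrix.nonneg_iff_posSemidef.mpr hA.posSemidef)
      (Matrix.nonneg_iff_posSemidef.mpr hB.posSemidef) (sub_nonneg.2 hl1) hl0 (by ring)
  have hexp : -(1 / p) ≤ 0 := neg_nonpos.2 (by positivity)
  rw [mpow_eq_rpow hM, mpow_eq_rpow hA.posSemidef, mpow_eq_rpow hB.posSemidef]
  exact Matrix.re_trace_cfc_le_of_smul_add_smul_le (hΦpow hA) (hΦpow hB) (sub_nonneg.2 hl1) hl0
    (by ring) hconc (Real.convexOn_rpow_of_nonpos hexp)
    (Real.antitoneOn_rpow_Ioi_of_exponent_nonpos hexp)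
end

section
/- Let Φ be a unital positive linear map on matrices and let A, B be positive definite with mI ≤ A, B ≤ MI, 0 < m < M, h = M/m. Then S(h)^{-2} (Δ_Φ(A) + Δ_Φ(B)) ≤ Δ_Φ(A+B) ≤ S(h)^2 (Δ_Φ(A) + Δ_Φ(B)), where Δ_Φ(X) = exp(Φ(log X)) and S is the Specht ratio. -/
open scoped ComplexOrder Kronecker

/-- The operator valued determinant `Δ_Φ(X) = exp Φ(log X)`. -/
noncomputable def DeltaPhi {n m : Type*} [Fintype n] [DecidableEq n]
    [Fintype m] [DecidableEq m]
    (Φ : Matrix n n ℂ →ₗ[ℂ] Matrix m m ℂ) (X : Matrix n n ℂ) : Matrix m m ℂ :=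
  cfc Real.exp (Φ (cfc Real.log X))

/-!
On `[log m, log M]` the exponential lies below its chord `ℓ`, and `ℓ(s) ≤ S(M/m) eˢ` for every
real `s`, since the Specht ratio is the maximum of `ℓ(s) e⁻ˢ`; with `s = log t` this gives
`t ≤ ℓ(log t) ≤ S(M/m) t` on `[m, M]`. A unital linear map commutes with the affine `ℓ` in the
functional calculus, so for `mI ≤ X ≤ MI` positivity of `Φ` yields
`Δ_Φ(X) ≤ ℓ(Φ(log X)) = Φ(ℓ(log X)) ≤ S Φ(X)` and `Φ(X) ≤ Φ(ℓ(log X)) = ℓ(Φ(log X)) ≤ S Δ_Φ(X)`.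
Apply this to `A`, `B` and `A + B` (which lies between `2mI` and `2MI`, with the same ratio) and
use additivity of `Φ`.
-/

open Real Set
open scoped MatrixOrder

noncomputable def expChordSlope (m M : ℝ) : ℝ := (M - m) / (log M - log m)

noncomputable def expChordIntercept (m M : ℝ) : ℝ := m - expChordSlope m M * log m

/-- The chord of `exp` through `(log m, m)` and `(log M, M)`. -/
noncomputable def expChord (m M s : ℝ) : ℝ := expChordSlope m M * s + expChordIntercept m M

section Scalar

variable {m M : ℝ}

lemma continuous_expChord : Continuous (expChord m M) := by
  unfold expChord; fun_prop

lemma expChordSlope_pos (hm : 0 < m) (hmM : m < M) : 0 < expChordSlope m M :=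
  div_pos (sub_pos.2 hmM) (sub_pos.2 (log_lt_log hm hmM))

lemma exp_le_expChord (hm : 0 < m) (hmM : m < M) {s : ℝ} (hs : s ∈ Icc (log m) (log M)) :
    exp s ≤ expChord m M s := by
  have hlog : 0 < log M - log m := sub_pos.2 (log_lt_log hm hmM)
  have hsecant : (log M - log m) * exp s ≤ (log M - s) * m + (s - log m) * M := by
    rcases hs.1.eq_or_lt with rfl | hlo
    · rw [exp_log hm]; linarith
    rcases hs.2.eq_or_lt with rfl | hhi
    · rw [exp_log (hm.trans hmM)]; linarith
    simpa only [exp_log hm, exp_log (hm.trans hmM)] using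
      convexOn_exp.secant_mono_aux1 (mem_univ _) (mem_univ _) hlo hhi
  rw [← mul_le_mul_iff_of_pos_left hlog]
  unfold expChord expChordIntercept expChordSlope
  field_simp
  linarith

lemma specht_div_eq (hm : 0 < m) (hmM : m < M) :
    Specht (M / m) =
      expChordSlope m M * exp (expChordIntercept m M / expChordSlope m M - 1) := by
  set h := M / m with hh
  have h1 : 1 < h := (one_lt_div hm).2 hmM
  have hM : M = m * h := by rw [hh]; field_simp
  have hlog : log M - log m = log h := by rw [hM, log_mul hm.ne' (by positivity)]; ring
  have hlogh : 0 < log h := log_pos h1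
  have hslope : expChordSlope m M = m * (h - 1) / log h := by
    rw [expChordSlope, hlog, hM]; ring
  have hexponent : expChordIntercept m M / expChordSlope m M - 1
      = log h * (1 / (h - 1)) - log m - 1 := by
    rw [expChordIntercept, hslope]; field_simp [(sub_pos.2 h1).ne']
  rw [hexponent, exp_sub, exp_sub, exp_log hm, ← rpow_def_of_pos (by positivity), hslope,
    Specht, if_neg h1.ne']
  field_simp

lemma specht_div_pos (hm : 0 < m) (hmM : m < M) : 0 < Specht (M / m) := by
  rw [specht_div_eq hm hmM]
  exact mul_pos (expChordSlope_pos hm hmM) (exp_pos _)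

lemma expChord_le_specht_mul_exp (hm : 0 < m) (hmM : m < M) (s : ℝ) :
    expChord m M s ≤ Specht (M / m) * exp s := by
  have hμ := expChordSlope_pos hm hmM
  set μ := expChordSlope m M
  set ν := expChordIntercept m M
  calc expChord m M s = μ * (ν / μ - 1 + s + 1) := by unfold expChord; field_simp; ring
    _ ≤ μ * exp (ν / μ - 1 + s) := by gcongr; exact add_one_le_exp _
    _ = Specht (M / m) * exp s := by rw [specht_div_eq hm hmM, exp_add, mul_assoc]

lemma le_expChord_log (hm : 0 < m) (hmM : m < M) {t : ℝ} (ht : t ∈ Icc m M) :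
    t ≤ expChord m M (log t) := by
  have ht0 : 0 < t := hm.trans_le ht.1
  simpa only [exp_log ht0] using
    exp_le_expChord hm hmM ⟨log_le_log hm ht.1, log_le_log ht0 ht.2⟩

lemma expChord_log_le_specht_mul (hm : 0 < m) (hmM : m < M) {t : ℝ} (ht : 0 < t) :
    expChord m M (log t) ≤ Specht (M / m) * t := by
  simpa only [exp_log ht] using expChord_le_specht_mul_exp hm hmM (log t)

end Scalar

lemma IsSelfAdjoint.of_algebraMap_le {A : Type*} [Ring A] [StarRing A] [PartialOrder A]
    [StarOrderedRing A] [Algebra ℝ A] [StarModule ℝ A] {r : ℝ} {a : A}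
    (h : algebraMap ℝ A r ≤ a) : IsSelfAdjoint a :=
  (IsSelfAdjoint.algebraMap A (.all r)).of_ge h

section Algebra

variable {A B : Type*} [Ring A] [Algebra ℝ A] [Ring B] [Algebra ℝ B]

lemma LinearMap.map_algebraMap_of_map_one (Φ : A →ₗ[ℝ] B) (hΦ1 : Φ 1 = 1) (r : ℝ) :
    Φ (algebraMap ℝ A r) = algebraMap ℝ B r := by
  rw [Algebra.algebraMap_eq_smul_one, map_smul, hΦ1, ← Algebra.algebraMap_eq_smul_one]

variable [StarRing A] [PartialOrder A] [StarOrderedRing A] [StarModule ℝ A] [TopologicalSpace A]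
  [ContinuousFunctionalCalculus ℝ A IsSelfAdjoint] [NonnegSpectrumClass ℝ A]

lemma spectrum_subset_Icc_of_le {a : A} {m M : ℝ} (hlo : algebraMap ℝ A m ≤ a)
    (hhi : a ≤ algebraMap ℝ A M) : spectrum ℝ a ⊆ Icc m M := by
  have ha := IsSelfAdjoint.of_algebraMap_le hlo
  exact fun x hx ↦ ⟨(algebraMap_le_iff_le_spectrum ha).1 hlo x hx,
    (le_algebraMap_iff_spectrum_le ha).1 hhi x hx⟩

lemma continuousOn_log_spectrum {a : A} {m : ℝ} (hm : 0 < m) (hlo : algebraMap ℝ A m ≤ a) :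
    ContinuousOn log (spectrum ℝ a) :=
  continuousOn_log.mono fun t ht ↦ (hm.trans_le <|
    (algebraMap_le_iff_le_spectrum (IsSelfAdjoint.of_algebraMap_le hlo)).1 hlo t ht).ne'

variable [PartialOrder B] (Φ : A →ₗ[ℝ] B) (hΦ : Monotone Φ) (hΦ1 : Φ 1 = 1) {a : A} {m M : ℝ}
  (hm : 0 < m) (hmM : m < M) (hlo : algebraMap ℝ A m ≤ a) (hhi : a ≤ algebraMap ℝ A M)
include hΦ hΦ1 hm hlo hhi

lemma algebraMap_log_le_map_cfc_log : algebraMap ℝ B (log m) ≤ Φ (cfc log a) := by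
  have hlog := continuousOn_log_spectrum hm hlo
  have ha := IsSelfAdjoint.of_algebraMap_le hlo
  rw [← Φ.map_algebraMap_of_map_one hΦ1]
  exact hΦ ((algebraMap_le_cfc_iff log _ a).2 fun t ht ↦
    log_le_log hm (spectrum_subset_Icc_of_le hlo hhi ht).1)

lemma map_cfc_log_le_algebraMap_log : Φ (cfc log a) ≤ algebraMap ℝ B (log M) := by
  have hlog := continuousOn_log_spectrum hm hlo
  have ha := IsSelfAdjoint.of_algebraMap_le hlo
  have hsp := spectrum_subset_Icc_of_le hlo hhi
  rw [← Φ.map_algebraMap_of_map_one hΦ1]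
  exact hΦ ((cfc_le_algebraMap_iff log _ a).2 fun t ht ↦
    log_le_log (hm.trans_le (hsp ht).1) (hsp ht).2)

variable [StarRing B] [StarOrderedRing B] [StarModule ℝ B] [TopologicalSpace B]
  [ContinuousFunctionalCalculus ℝ B IsSelfAdjoint]

lemma map_cfc_expChord_log :
    Φ (cfc (fun t ↦ expChord m M (log t)) a) = cfc (expChord m M) (Φ (cfc log a)) := by
  have hlog := continuousOn_log_spectrum hm hlo
  have ha := IsSelfAdjoint.of_algebraMap_le hlo
  have hT := IsSelfAdjoint.of_algebraMap_le (algebraMap_log_le_map_cfc_log Φ hΦ hΦ1 hm hlo hhi)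
  unfold expChord
  rw [cfc_add_const _ (fun t ↦ _ * log t) a, cfc_const_mul _ log a,
    cfc_add_const _ (_ * ·) (Φ (cfc log a)), cfc_const_mul_id _ (Φ (cfc log a)),
    map_add, map_smul, Φ.map_algebraMap_of_map_one hΦ1]

include hmM

theorem le_specht_smul_cfc_exp_map_cfc_log :
    Φ a ≤ Specht (M / m) • cfc exp (Φ (cfc log a)) := by
  have hsp := spectrum_subset_Icc_of_le hlo hhi
  have ha := IsSelfAdjoint.of_algebraMap_le hlo
  calc Φ a = Φ (cfc id a) := by rw [cfc_id ℝ a]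
    _ ≤ Φ (cfc (fun t ↦ expChord m M (log t)) a) :=
        hΦ (cfc_mono (fun t ht ↦ le_expChord_log hm hmM (hsp ht))
          (hg := continuous_expChord.comp_continuousOn (continuousOn_log_spectrum hm hlo)))
    _ = cfc (expChord m M) (Φ (cfc log a)) := map_cfc_expChord_log Φ hΦ hΦ1 hm hlo hhi
    _ ≤ cfc (fun s ↦ Specht (M / m) * exp s) (Φ (cfc log a)) :=
        cfc_mono (fun s _ ↦ expChord_le_specht_mul_exp hm hmM s)
          (hf := continuous_expChord.continuousOn)
    _ = Specht (M / m) • cfc exp (Φ (cfc log a)) := cfc_const_mul _ _ _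

variable [NonnegSpectrumClass ℝ B]

theorem cfc_exp_map_cfc_log_le_specht_smul :
    cfc exp (Φ (cfc log a)) ≤ Specht (M / m) • Φ a := by
  have hsp := spectrum_subset_Icc_of_le hlo hhi
  have hT := spectrum_subset_Icc_of_le (algebraMap_log_le_map_cfc_log Φ hΦ hΦ1 hm hlo hhi)
    (map_cfc_log_le_algebraMap_log Φ hΦ hΦ1 hm hlo hhi)
  have ha := IsSelfAdjoint.of_algebraMap_le hlo
  calc cfc exp (Φ (cfc log a)) ≤ cfc (expChord m M) (Φ (cfc log a)) :=
        cfc_mono (fun s hs ↦ exp_le_expChord hm hmM (hT hs))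
          (hg := continuous_expChord.continuousOn)
    _ = Φ (cfc (fun t ↦ expChord m M (log t)) a) :=
        (map_cfc_expChord_log Φ hΦ hΦ1 hm hlo hhi).symm
    _ ≤ Φ (cfc (fun t ↦ Specht (M / m) * t) a) :=
        hΦ (cfc_mono (fun t ht ↦ expChord_log_le_specht_mul hm hmM (hm.trans_le (hsp ht).1))
          (hf := continuous_expChord.comp_continuousOn (continuousOn_log_spectrum hm hlo)))
    _ = Specht (M / m) • Φ a := by rw [cfc_const_mul_id _ a, map_smul]

end Algebra

section Matrix

variable {n k : Type*}

lemma loewnerLE_iff_le [Fintype n] {X Y : Matrix n n ℂ} : LoewnerLE X Y ↔ X ≤ Y := Iff.rfl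

lemma monotone_restrictScalars_of_posSemidef (Φ : Matrix n n ℂ →ₗ[ℂ] Matrix k k ℂ)
    (hΦpos : ∀ X : Matrix n n ℂ, X.PosSemidef → (Φ X).PosSemidef) :
    Monotone (Φ.restrictScalars ℝ) := fun X Y hXY ↦ by
  simpa only [Matrix.le_iff, LinearMap.coe_restrictScalars, map_sub] using hΦpos _ hXY

variable [Fintype n] [DecidableEq n] [Fintype k] [DecidableEq k]
  (Φ : Matrix n n ℂ →ₗ[ℂ] Matrix k k ℂ)
  (hΦpos : ∀ X : Matrix n n ℂ, X.PosSemidef → (Φ X).PosSemidef) (hΦunital : Φ 1 = 1)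
  {X : Matrix n n ℂ} {m M : ℝ} (hm : 0 < m) (hmM : m < M)
  (hlo : m • (1 : Matrix n n ℂ) ≤ X) (hhi : X ≤ M • (1 : Matrix n n ℂ))
include hΦpos hΦunital hm hmM hlo hhi

theorem deltaPhi_le_specht_smul : DeltaPhi Φ X ≤ Specht (M / m) • Φ X := by
  rw [← Algebra.algebraMap_eq_smul_one] at hlo hhi
  exact cfc_exp_map_cfc_log_le_specht_smul (Φ.restrictScalars ℝ)
    (monotone_restrictScalars_of_posSemidef Φ hΦpos) hΦunital hm hmM hlo hhi

theorem le_specht_smul_deltaPhi : Φ X ≤ Specht (M / m) • DeltaPhi Φ X := by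
  rw [← Algebra.algebraMap_eq_smul_one] at hlo hhi
  exact le_specht_smul_cfc_exp_map_cfc_log (Φ.restrictScalars ℝ)
    (monotone_restrictScalars_of_posSemidef Φ hΦpos) hΦunital hm hmM hlo hhi

end Matrix

theorem operator_determinant_specht_general {n m : Type*} [Fintype n] [DecidableEq n]
    [Fintype m] [DecidableEq m]
    (Φ : Matrix n n ℂ →ₗ[ℂ] Matrix m m ℂ)
    (hΦpos : ∀ A : Matrix n n ℂ, A.PosSemidef → (Φ A).PosSemidef)
    (hΦunital : Φ 1 = 1)
    (A B : Matrix n n ℂ)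
    (m₀ M₀ : ℝ) (hm : 0 < m₀) (hmM : m₀ < M₀)
    (hAlow : LoewnerLE (m₀ • (1 : Matrix n n ℂ)) A)
    (hAup : LoewnerLE A (M₀ • (1 : Matrix n n ℂ)))
    (hBlow : LoewnerLE (m₀ • (1 : Matrix n n ℂ)) B)
    (hBup : LoewnerLE B (M₀ • (1 : Matrix n n ℂ))) :
    LoewnerLE ((Specht (M₀ / m₀) ^ 2)⁻¹ • (DeltaPhi Φ A + DeltaPhi Φ B))
        (DeltaPhi Φ (A + B)) ∧
      LoewnerLE (DeltaPhi Φ (A + B))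
        ((Specht (M₀ / m₀) ^ 2) • (DeltaPhi Φ A + DeltaPhi Φ B)) := by
  simp only [loewnerLE_iff_le] at *
  set S := Specht (M₀ / m₀)
  have hS : 0 < S := specht_div_pos hm hmM
  have hsum_lo : (2 * m₀) • (1 : Matrix n n ℂ) ≤ A + B := by
    rw [two_mul, add_smul]; exact add_le_add hAlow hBlow
  have hsum_hi : A + B ≤ (2 * M₀) • (1 : Matrix n n ℂ) := by
    rw [two_mul, add_smul]; exact add_le_add hAup hBup
  have hS_sum : Specht (2 * M₀ / (2 * m₀)) = S := by rw [mul_div_mul_left _ _ two_ne_zero]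
  have hm2 : 0 < 2 * m₀ := by positivity
  have hmM2 : 2 * m₀ < 2 * M₀ := by linarith
  constructor
  · rw [inv_smul_le_iff_of_pos (by positivity)]
    calc DeltaPhi Φ A + DeltaPhi Φ B ≤ S • Φ A + S • Φ B :=
          add_le_add (deltaPhi_le_specht_smul Φ hΦpos hΦunital hm hmM hAlow hAup)
            (deltaPhi_le_specht_smul Φ hΦpos hΦunital hm hmM hBlow hBup)
      _ = S • Φ (A + B) := by rw [map_add, smul_add]
      _ ≤ S • (S • DeltaPhi Φ (A + B)) := smul_le_smul_of_nonneg_left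
          (hS_sum ▸ le_specht_smul_deltaPhi Φ hΦpos hΦunital hm2 hmM2 hsum_lo hsum_hi) hS.le
      _ = S ^ 2 • DeltaPhi Φ (A + B) := by rw [smul_smul, sq]
  · calc DeltaPhi Φ (A + B) ≤ S • Φ (A + B) :=
          hS_sum ▸ deltaPhi_le_specht_smul Φ hΦpos hΦunital hm2 hmM2 hsum_lo hsum_hi
      _ = S • Φ A + S • Φ B := by rw [map_add, smul_add]
      _ ≤ S • (S • DeltaPhi Φ A) + S • (S • DeltaPhi Φ B) := add_le_add
          (smul_le_smul_of_nonneg_left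
            (le_specht_smul_deltaPhi Φ hΦpos hΦunital hm hmM hAlow hAup) hS.le)
          (smul_le_smul_of_nonneg_left
            (le_specht_smul_deltaPhi Φ hΦpos hΦunital hm hmM hBlow hBup) hS.le)
      _ = S ^ 2 • (DeltaPhi Φ A + DeltaPhi Φ B) := by rw [smul_smul, smul_smul, ← sq, smul_add]

theorem operator_determinant_specht {n m : Type*} [Fintype n] [DecidableEq n]
    [Fintype m] [DecidableEq m]
    (Φ : Matrix n n ℂ →ₗ[ℂ] Matrix m m ℂ)
    (hΦpos : ∀ A : Matrix n n ℂ, A.PosSemidef → (Φ A).PosSemidef)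
    (hΦunital : Φ 1 = 1)
    (A B : Matrix n n ℂ) (hA : A.PosDef) (hB : B.PosDef)
    (m₀ M₀ : ℝ) (hm : 0 < m₀) (hmM : m₀ < M₀)
    (hAlow : LoewnerLE (m₀ • (1 : Matrix n n ℂ)) A)
    (hAup : LoewnerLE A (M₀ • (1 : Matrix n n ℂ)))
    (hBlow : LoewnerLE (m₀ • (1 : Matrix n n ℂ)) B)
    (hBup : LoewnerLE B (M₀ • (1 : Matrix n n ℂ))) :
    LoewnerLE ((Specht (M₀ / m₀) ^ 2)⁻¹ • (DeltaPhi Φ A + DeltaPhi Φ B))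
        (DeltaPhi Φ (A + B)) ∧
      LoewnerLE (DeltaPhi Φ (A + B))
        ((Specht (M₀ / m₀) ^ 2) • (DeltaPhi Φ A + DeltaPhi Φ B)) :=
  operator_determinant_specht_general Φ hΦpos hΦunital A B m₀ M₀ hm hmM hAlow hAup hBlow hBup
end
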